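/- arXiv:1604.03181 — 5 statements merged into one kernel-verified Lean document; each statement's English description precedes it below -/
import Mathlib

section
/- Let M = [[e,f],[g,h]] ∈ SL_2(ℂ) with trace μ, and let {E, H, F} be the standard basis of sl_2(ℂ) (E = [[0,1],[0,0]], H = [[1,0],[0,-1]], F = [[0,0],[1,0]]). Then for every positive integer p, the matrix of (Ad_M)^p with respect to this basis has entries: D_{11} = (S_p(μ) - h S_{p-1}(μ))², D_{12} = -2f S_{p-1}(μ)(S_p(μ) - h S_{p-1}(μ)), D_{13} = -f² S_{p-1}(μ)², D_{21} = -g S_{p-1}(μ)(S_p(μ) - h S_{p-1}(μ)), D_{22} = (S_p(μ) - h S_{p-1}(μ))(S_p(μ) - e S_{p-1}(μ)) + fg S_{p-1}(μ)², D_{23} = f S_{p-1}(μ)(S_p(μ) - e S_{p-1}(μ)), D_{31} = -g² S_{p-1}(μ)², D_{32} = 2g S_{p-1}(μ)(S_p(μ) - e S_{p-1}(μ)), D_{33} = (S_p(μ) - e S_{p-1}(μ))², where S_k are the Chebyshev polynomials of the second kind. -/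
/-- The matrix of the adjoint action `g ↦ M g M⁻¹` on `sl₂(ℂ)` in the ordered basis
`E = [[0,1],[0,0]]`, `H = [[1,0],[0,-1]]`, `F = [[0,0],[1,0]]`. -/
noncomputable def AdMat (M : Matrix (Fin 2) (Fin 2) ℂ) : Matrix (Fin 3) (Fin 3) ℂ :=
  Matrix.of fun i j =>
    let g := M * ![(!![0,1;0,0] : Matrix (Fin 2) (Fin 2) ℂ), !![1,0;0,-1], !![0,0;1,0]] j * M⁻¹
    ![g 0 1, g 0 0, g 1 0] i

lemma mat_inv_aux (e f g h : ℂ) (hdet : e * h - f * g = 1) :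
    (!![e, f; g, h] : Matrix (Fin 2) (Fin 2) ℂ)⁻¹ = !![h, -f; -g, e] := by
  apply Matrix.inv_eq_right_inv
  ext i j
  fin_cases i <;> fin_cases j <;>
    simp [Matrix.mul_apply, Fin.sum_univ_two] <;>
      first
        | ring1
        | linear_combination hdet

lemma adMat_eq (e f g h : ℂ) (hdet : e * h - f * g = 1) :
    AdMat !![e, f; g, h] =
      !![e^2, -2*e*f, -f^2; -e*g, e*h + f*g, f*h; -g^2, 2*g*h, h^2] := by
  ext i j
  fin_cases i <;> fin_cases j <;>
    simp [AdMat, mat_inv_aux e f g h hdet, Matrix.mul_apply, Fin.sum_univ_two] <;> ring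

/-- Proposition 2 of the paper: the entries of `(Ad_M)^p`. -/
theorem adjoint_pow_entries
    (S : ℤ → ℂ → ℂ)
    (hS0 : ∀ v, S 0 v = 1) (hS1 : ∀ v, S 1 v = v)
    (hSrec : ∀ (k : ℤ) (v : ℂ), S k v = v * S (k - 1) v - S (k - 2) v)
    (e f g h : ℂ) (hdet : e * h - f * g = 1)
    (μ : ℂ) (hμ : μ = e + h)
    (p : ℕ) (hp : 0 < p) :
    (AdMat !![e, f; g, h]) ^ p =
      !![(S p μ - h * S ((p : ℤ) - 1) μ) ^ 2,
         -2 * f * S ((p : ℤ) - 1) μ * (S p μ - h * S ((p : ℤ) - 1) μ),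
         -f ^ 2 * S ((p : ℤ) - 1) μ ^ 2;
         -g * S ((p : ℤ) - 1) μ * (S p μ - h * S ((p : ℤ) - 1) μ),
         (S p μ - h * S ((p : ℤ) - 1) μ) * (S p μ - e * S ((p : ℤ) - 1) μ)
           + f * g * S ((p : ℤ) - 1) μ ^ 2,
         f * S ((p : ℤ) - 1) μ * (S p μ - e * S ((p : ℤ) - 1) μ);
         -g ^ 2 * S ((p : ℤ) - 1) μ ^ 2,
         2 * g * S ((p : ℤ) - 1) μ * (S p μ - e * S ((p : ℤ) - 1) μ),
         (S p μ - e * S ((p : ℤ) - 1) μ) ^ 2] := by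
  induction p, hp using Nat.le_induction with
  | base =>
    rw [pow_one, adMat_eq e f g h hdet]
    ext i j
    fin_cases i <;> fin_cases j <;> simp [hS1, hS0, hμ] <;> ring
  | succ p hp ih =>
    have hA : S ((p + 1 : ℕ) : ℤ) μ = (e + h) * S (p : ℤ) μ - S ((p : ℤ) - 1) μ := by
      have h2 := hSrec ((p : ℤ) + 1) μ
      rw [show (p : ℤ) + 1 - 1 = (p : ℤ) by ring, show (p : ℤ) + 1 - 2 = (p : ℤ) - 1 by ring]
        at h2
      rw [show ((p + 1 : ℕ) : ℤ) = (p : ℤ) + 1 by push_cast; ring, h2, hμ]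
    have hA2 : S ((p : ℤ) + 1) μ = (e + h) * S (p : ℤ) μ - S ((p : ℤ) - 1) μ := by
      rw [← show ((p + 1 : ℕ) : ℤ) = (p : ℤ) + 1 by push_cast; ring, hA]
    have hB : S (((p + 1 : ℕ) : ℤ) - 1) μ = S (p : ℤ) μ := by
      rw [show ((p + 1 : ℕ) : ℤ) - 1 = (p : ℤ) by push_cast; ring]
    rw [pow_succ, ih, adMat_eq e f g h hdet]
    ext i j
    set A := S (p : ℤ) μ with hA'
    set B := S ((p : ℤ) - 1) μ with hB'
    fin_cases i <;> fin_cases j <;>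
      simp [Matrix.mul_apply, Fin.sum_univ_succ, hA, hB, hA2]
    · linear_combination (B^2 - f*g*B^2 - 2*e*A*B + e*h*B^2) * hdet
    · linear_combination (2*f*A*B) * hdet
    · ring
    · linear_combination (g*A*B) * hdet
    · linear_combination (B^2 - h*A*B - f*g*B^2 - e*A*B + e*h*B^2) * hdet
    · linear_combination (-f*A*B) * hdet
    · ring
    · linear_combination (-2*g*A*B) * hdet
    · linear_combination (B^2 - 2*h*A*B - f*g*B^2 + e*h*B^2) * hdet
end

section
/- Let M = [[e,f],[g,h]] ∈ SL_2(ℂ) with trace μ satisfying μ² ≠ 4, and set X = S_{n-1}(μ)² and Y = S_{n-1}(μ)S_{n-2}(μ). Then the (1,3)-entry of the 3×3 matrix Σ_{i=0}^{n-1} (Ad_M)^i, computed in the basis {E,H,F} of sl_2(ℂ), equals f²(2n - 2X + μY)/(μ² - 4). -/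
/-- Explicit form of `AdMat` for a matrix of determinant one. -/
lemma AdMat_explicit (e f g h : ℂ) (hdet : e * h - f * g = 1) :
    AdMat !![e, f; g, h] =
      !![e^2, -2*e*f, -f^2; -e*g, e*h+f*g, f*h; -g^2, 2*g*h, h^2] := by
  have hinv : (!![e, f; g, h] : Matrix (Fin 2) (Fin 2) ℂ)⁻¹ = !![h, -f; -g, e] := by
    apply Matrix.inv_eq_right_inv
    ext i j
    fin_cases i <;> fin_cases j <;>
      simp [Matrix.mul_apply, Fin.sum_univ_succ] <;>
      (first | ring1 | linear_combination hdet)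
  ext i j
  fin_cases i <;> fin_cases j <;>
    simp [AdMat, hinv, Matrix.mul_apply, Fin.sum_univ_succ] <;> ring

/-- the `(1,3)`-entry of `Σ_{i=0}^{n-1} (Ad_M)^i` equals
`f²(2n - 2X + μY)/(μ² - 4)`, where `X = S_{n-1}(μ)²`, `Y = S_{n-1}(μ)S_{n-2}(μ)`. -/
theorem adjoint_sum_entry_one_three
    (S : ℤ → ℂ → ℂ)
    (hS0 : ∀ v, S 0 v = 1) (hS1 : ∀ v, S 1 v = v)
    (hSrec : ∀ (k : ℤ) (v : ℂ), S k v = v * S (k - 1) v - S (k - 2) v)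
    (e f g h : ℂ) (hdet : e * h - f * g = 1)
    (μ : ℂ) (hμ : μ = e + h) (hμ4 : μ ^ 2 ≠ 4)
    (n : ℕ) (hn : 0 < n)
    (X Y : ℂ) (hX : X = S ((n : ℤ) - 1) μ ^ 2) (hY : Y = S ((n : ℤ) - 1) μ * S ((n : ℤ) - 2) μ) :
    (∑ i ∈ Finset.range n, (AdMat !![e, f; g, h]) ^ i) 0 2 =
      f ^ 2 * (2 * n - 2 * X + μ * Y) / (μ ^ 2 - 4) := by
  set A := AdMat !![e, f; g, h] with hA
  have hAex : A = !![e^2, -2*e*f, -f^2; -e*g, e*h+f*g, f*h; -g^2, 2*g*h, h^2] :=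
    AdMat_explicit e f g h hdet
  have ha00 : A 0 0 = e^2 := by rw [hAex]; simp
  have ha01 : A 0 1 = -2*e*f := by rw [hAex]; simp
  have ha02 : A 0 2 = -f^2 := by rw [hAex]; simp
  have ha10 : A 1 0 = -e*g := by rw [hAex]; simp
  have ha11 : A 1 1 = e*h+f*g := by rw [hAex]; simp
  have ha12 : A 1 2 = f*h := by rw [hAex]; simp
  have ha20 : A 2 0 = -g^2 := by rw [hAex]; simp
  have ha21 : A 2 1 = 2*g*h := by rw [hAex]; simp
  have ha22 : A 2 2 = h^2 := by rw [hAex]; simp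
  have hSm1 : S (-1) μ = 0 := by
    have h1 := hSrec 1 μ
    rw [show (1:ℤ) - 1 = 0 by norm_num, show (1:ℤ) - 2 = -1 by norm_num, hS1, hS0] at h1
    linear_combination h1
  have hSm2 : S (-2) μ = -1 := by
    have h1 := hSrec 0 μ
    rw [show (0:ℤ) - 1 = -1 by norm_num, show (0:ℤ) - 2 = -2 by norm_num, hS0] at h1
    linear_combination h1 + μ * hSm1
  have hrecs : ∀ i : ℕ, S ((i:ℤ) + 1 - 1) μ = μ * S ((i:ℤ) - 1) μ - S ((i:ℤ) - 2) μ := by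
    intro i
    have h3 := hSrec ((i:ℤ)) μ
    rw [show ((i:ℤ) + 1 - 1) = (i:ℤ) by ring]
    exact h3
  -- row 0 of A^i
  have hrow : ∀ i : ℕ,
      (A ^ i) 0 0 = (S ((i:ℤ) - 1) μ * e - S ((i:ℤ) - 2) μ) ^ 2 ∧
      (A ^ i) 0 1 = -2 * (S ((i:ℤ) - 1) μ * e - S ((i:ℤ) - 2) μ) * (S ((i:ℤ) - 1) μ * f) ∧
      (A ^ i) 0 2 = -(S ((i:ℤ) - 1) μ * f) ^ 2 := by
    intro i
    induction i with
    | zero =>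
        simp only [pow_zero, Nat.cast_zero, zero_sub]
        rw [show -(1:ℤ) = (-1:ℤ) by norm_num, show -(2:ℤ) = (-2:ℤ) by norm_num, hSm1, hSm2]
        norm_num [Matrix.one_apply]
        decide
    | succ i ih =>
        obtain ⟨h0, h1, h2⟩ := ih
        have hpow : A ^ (i + 1) = A ^ i * A := pow_succ A i
        have hmul : ∀ j : Fin 3, (A ^ i * A) 0 j =
            (A ^ i) 0 0 * A 0 j + (A ^ i) 0 1 * A 1 j + (A ^ i) 0 2 * A 2 j := by
          intro j
          rw [Matrix.mul_apply, Fin.sum_univ_three]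
        have e2 : ((i:ℤ) + 1 - 2) = (i:ℤ) - 1 := by ring
        refine ⟨?_, ?_, ?_⟩ <;>
          · rw [hpow, hmul, h0, h1, h2]
            simp only [ha00, ha01, ha02, ha10, ha11, ha12, ha20, ha21, ha22]
            push_cast
            simp only [hrecs i, e2]
            subst hμ
            first
            | ring1
            | linear_combination
                (-(S ((i:ℤ) - 1) ((e:ℂ)+h) * (2*S ((i:ℤ) - 1) ((e:ℂ)+h)*e^2
                  - 2*S ((i:ℤ) - 2) ((e:ℂ)+h)*e + S ((i:ℤ) - 1) ((e:ℂ)+h)*f*g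
                  + S ((i:ℤ) - 1) ((e:ℂ)+h)*e*h - S ((i:ℤ) - 1) ((e:ℂ)+h)))) * hdet
            | linear_combination
                (S ((i:ℤ) - 1) ((e:ℂ)+h) * (2*S ((i:ℤ) - 1) ((e:ℂ)+h)*e^2
                  - 2*S ((i:ℤ) - 2) ((e:ℂ)+h)*e + S ((i:ℤ) - 1) ((e:ℂ)+h)*f*g
                  + S ((i:ℤ) - 1) ((e:ℂ)+h)*e*h - S ((i:ℤ) - 1) ((e:ℂ)+h))) * hdet
            | linear_combination
                (2 * (((e:ℂ)+h)*S ((i:ℤ) - 1) ((e:ℂ)+h) - S ((i:ℤ) - 2) ((e:ℂ)+h)) * f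
                  * S ((i:ℤ) - 1) ((e:ℂ)+h)) * hdet
            | linear_combination
                (-2 * (((e:ℂ)+h)*S ((i:ℤ) - 1) ((e:ℂ)+h) - S ((i:ℤ) - 2) ((e:ℂ)+h)) * f
                  * S ((i:ℤ) - 1) ((e:ℂ)+h)) * hdet
  -- determinant identity for Chebyshev values
  have hD : ∀ m : ℕ,
      S ((m:ℤ) - 1) μ ^ 2 - μ * S ((m:ℤ) - 1) μ * S ((m:ℤ) - 2) μ + S ((m:ℤ) - 2) μ ^ 2 = 1 := by
    intro m
    induction m with
    | zero =>
        simp only [Nat.cast_zero, zero_sub]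
        rw [show -(1:ℤ) = (-1:ℤ) by norm_num, show -(2:ℤ) = (-2:ℤ) by norm_num, hSm1, hSm2]
        ring
    | succ m ih =>
        have e2 : ((m:ℤ) + 1 - 2) = (m:ℤ) - 1 := by ring
        push_cast
        rw [hrecs m, e2]
        linear_combination ih
  -- the summation identity
  have hsum : ∀ m : ℕ,
      (μ ^ 2 - 4) * ∑ i ∈ Finset.range m, S ((i:ℤ) - 1) μ ^ 2 =
        2 * S ((m:ℤ) - 1) μ ^ 2 - μ * S ((m:ℤ) - 1) μ * S ((m:ℤ) - 2) μ - 2 * m := by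
    intro m
    induction m with
    | zero =>
        simp only [Nat.cast_zero, zero_sub, Finset.range_zero, Finset.sum_empty, mul_zero]
        rw [show -(1:ℤ) = (-1:ℤ) by norm_num, show -(2:ℤ) = (-2:ℤ) by norm_num, hSm1, hSm2]
        ring
    | succ m ih =>
        rw [Finset.sum_range_succ, mul_add, ih]
        have e2 : ((m:ℤ) + 1 - 2) = (m:ℤ) - 1 := by ring
        push_cast
        rw [hrecs m, e2]
        first
        | linear_combination -2 * hD m
        | linear_combination 2 * hD m
  -- put it together
  have hentry : (∑ i ∈ Finset.range n, A ^ i) 0 2 =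
      ∑ i ∈ Finset.range n, -(S ((i:ℤ) - 1) μ * f) ^ 2 := by
    rw [Matrix.sum_apply]
    exact Finset.sum_congr rfl fun i _ => (hrow i).2.2
  rw [hentry]
  have hne : μ ^ 2 - 4 ≠ 0 := sub_ne_zero.mpr hμ4
  rw [hX, hY, eq_div_iff hne]
  have hsplit : ∑ i ∈ Finset.range n, -(S ((i:ℤ) - 1) μ * f) ^ 2 =
      -f ^ 2 * ∑ i ∈ Finset.range n, S ((i:ℤ) - 1) μ ^ 2 := by
    rw [Finset.mul_sum]
    exact Finset.sum_congr rfl fun i _ => by ring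
  rw [hsplit]
  have hs := hsum n
  linear_combination (-(f^2)) * hs
end

section
/- Let s ≠ 0 and y be complex numbers, A = [[s,1],[0,s^{-1}]], B = [[s,0],[2-y,s^{-1}]], and m a positive integer. Then the (1,1)-entry of w = (BA^{-1})^m(B^{-1}A)^m equals S_m(y)² + (2-2y)S_m(y)S_{m-1}(y) + (1 + 2s² - 2y - s²y + y²)S_{m-1}(y)², and the (2,1)-entry of w equals (2-y) times the (1,2)-entry of w, where S_k are the Chebyshev polynomials of the second kind. -/
lemma pow_of_CH (S : ℤ → ℂ → ℂ)
    (hS0 : ∀ v, S 0 v = 1) (hS1 : ∀ v, S 1 v = v)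
    (hSrec : ∀ (k : ℤ) (v : ℂ), S k v = v * S (k - 1) v - S (k - 2) v)
    (y : ℂ) (M : Matrix (Fin 2) (Fin 2) ℂ) (hM : M * M = y • M - 1) (n : ℕ) :
    M ^ n = S ((n : ℤ) - 1) y • M - S ((n : ℤ) - 2) y • (1 : Matrix (Fin 2) (Fin 2) ℂ) := by
  have hm1 : S (-1) y = 0 := by
    have := hSrec 1 y
    simp [hS0, hS1] at this
    linear_combination this
  have hm2 : S (-2) y = -1 := by
    have := hSrec 0 y
    simp [hS0, hm1] at this
    -- trivial
    linear_combination this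
  induction n with
  | zero => simp [hm1, hm2]
  | succ n ih =>
    have hcast1 : ((n : ℤ) + 1) - 1 = (n : ℤ) := by ring
    have hcast2 : ((n : ℤ) + 1) - 2 = (n : ℤ) - 1 := by ring
    have hrec := hSrec ((n : ℤ)) y
    rw [pow_succ, ih]
    push_cast [hcast1, hcast2]
    rw [sub_mul, Matrix.smul_mul, Matrix.smul_mul, hM, Matrix.one_mul]
    rw [smul_sub, smul_smul, hrec]
    ext i j
    simp [Matrix.sub_apply, Matrix.smul_apply, Matrix.one_apply]
    ring

/-- the `(1,1)`-entry of `w = (BA⁻¹)^m (B⁻¹A)^m`, and the relation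
between its `(2,1)`- and `(1,2)`-entries. -/
theorem entries_of_w
    (S : ℤ → ℂ → ℂ)
    (hS0 : ∀ v, S 0 v = 1) (hS1 : ∀ v, S 1 v = v)
    (hSrec : ∀ (k : ℤ) (v : ℂ), S k v = v * S (k - 1) v - S (k - 2) v)
    (s y : ℂ) (hs : s ≠ 0) (m : ℕ) (hm : 0 < m)
    (A B : Matrix (Fin 2) (Fin 2) ℂ)
    (hA : A = !![s, 1; 0, s⁻¹]) (hB : B = !![s, 0; 2 - y, s⁻¹])
    (w : Matrix (Fin 2) (Fin 2) ℂ) (hw : w = (B * A⁻¹) ^ m * (B⁻¹ * A) ^ m) :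
    w 0 0 = S m y ^ 2 + (2 - 2 * y) * S m y * S ((m : ℤ) - 1) y +
        (1 + 2 * s ^ 2 - 2 * y - s ^ 2 * y + y ^ 2) * S ((m : ℤ) - 1) y ^ 2 ∧
    w 1 0 = (2 - y) * w 0 1 := by
  have hAinv : A⁻¹ = !![s⁻¹, -1; 0, s] := by
    apply Matrix.inv_eq_right_inv
    rw [hA]
    ext i j
    fin_cases i <;> fin_cases j <;>
      simp [Matrix.mul_apply, Fin.sum_univ_two, Matrix.one_apply] <;> (try field_simp)
  have hBinv : B⁻¹ = !![s⁻¹, 0; -(2 - y), s] := by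
    apply Matrix.inv_eq_right_inv
    rw [hB]
    ext i j
    fin_cases i <;> fin_cases j <;>
      simp [Matrix.mul_apply, Fin.sum_univ_two, Matrix.one_apply] <;> (try field_simp) <;> (try ring)
  have hP : B * A⁻¹ = !![1, -s; (2 - y) * s⁻¹, y - 1] := by
    rw [hB, hAinv]
    ext i j
    fin_cases i <;> fin_cases j <;>
      simp [Matrix.mul_apply, Fin.sum_univ_two] <;> (try field_simp) <;> (try ring)
  have hQ : B⁻¹ * A = !![1, s⁻¹; -((2 - y) * s), y - 1] := by
    rw [hBinv, hA]
    ext i j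
    fin_cases i <;> fin_cases j <;>
      simp [Matrix.mul_apply, Fin.sum_univ_two] <;> (try field_simp) <;> (try ring)
  have hPCH : (B * A⁻¹) * (B * A⁻¹) = y • (B * A⁻¹) - 1 := by
    rw [hP]
    ext i j
    fin_cases i <;> fin_cases j <;>
      simp [Matrix.mul_apply, Fin.sum_univ_two, Matrix.one_apply] <;> (try field_simp) <;> (try ring)
  have hQCH : (B⁻¹ * A) * (B⁻¹ * A) = y • (B⁻¹ * A) - 1 := by
    rw [hQ]
    ext i j
    fin_cases i <;> fin_cases j <;>
      simp [Matrix.mul_apply, Fin.sum_univ_two, Matrix.one_apply] <;> (try field_simp) <;> (try ring)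
  have hPpow := pow_of_CH S hS0 hS1 hSrec y _ hPCH m
  have hQpow := pow_of_CH S hS0 hS1 hSrec y _ hQCH m
  set a := S ((m : ℤ) - 1) y with ha
  set b := S ((m : ℤ) - 2) y with hb
  have hSm : S (m : ℤ) y = y * a - b := by
    have := hSrec (m : ℤ) y
    rw [this]
  rw [hw, hPpow, hQpow, hP, hQ]
  constructor
  · rw [hSm]
    simp [Matrix.mul_apply, Fin.sum_univ_two, Matrix.sub_apply, Matrix.smul_apply,
      Matrix.one_apply]
    try field_simp
    ring
  · simp [Matrix.mul_apply, Fin.sum_univ_two, Matrix.sub_apply, Matrix.smul_apply,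
      Matrix.one_apply]
    try field_simp
end

section
/- Let F be the free group on two generators a, b, and let ∂/∂a denote the Fox derivative with respect to a on the group ring ℤ[F]. Let m, n be positive integers, w = (ba^{-1})^m(b^{-1}a)^m, and r = w^n a w^{-n} b^{-1}. Then in ℤ[F], ∂r/∂a = w^n (1 + (1-a) δ_{n-1}(w^{-1}) (a^{-1}b)^m (b^{-1}-1) δ_{m-1}(ab^{-1})), where δ_p(u) = 1 + u + u² + ... + u^p. -/
lemma pow_cancel' {R : Type*} [Ring R] (x y : R) (h : y * x = 1) :
    ∀ k : ℕ, y ^ k * x ^ k = 1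
  | 0 => by simp
  | (k+1) => by
    rw [pow_succ, pow_succ']
    calc y ^ k * y * (x * x ^ k) = y ^ k * (y * x) * x ^ k := by
          rw [mul_assoc, mul_assoc, mul_assoc]
      _ = 1 := by rw [h, mul_one, pow_cancel' x y h k]

lemma geom_flip {R : Type*} [Ring R] (x y : R) (h : y * x = 1) :
    ∀ k : ℕ, y ^ k * (∑ i ∈ Finset.range k, x ^ i) * x = ∑ i ∈ Finset.range k, y ^ i
  | 0 => by simp
  | (k+1) => by
    rw [Finset.sum_range_succ, mul_add, add_mul, mul_assoc (y^(k+1)) (x^k) x, ← pow_succ,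
      pow_cancel' x y h (k+1), Finset.sum_range_succ']
    congr 1
    · calc (y ^ (k+1) * ∑ i ∈ Finset.range k, x ^ i) * x
          = y * (y ^ k * (∑ i ∈ Finset.range k, x ^ i) * x) := by
            simp [pow_succ', mul_assoc]
      _ = y * ∑ i ∈ Finset.range k, y ^ i := by rw [geom_flip x y h k]
      _ = ∑ i ∈ Finset.range k, y ^ (i+1) := by
            rw [Finset.mul_sum]; exact Finset.sum_congr rfl fun i _ => (pow_succ' y i).symm
    · simp

lemma conj_pow' {G : Type*} [Group G] (x y : G) (i : ℕ) : (x*y)^i * x = x * (y*x)^i := by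
  induction i with
  | zero => simp
  | succ k ih =>
    rw [pow_succ (x*y) k, mul_assoc, mul_assoc, ← mul_assoc, ih, mul_assoc, ← pow_succ]


/-- Lemma on the Fox derivative: in the free group `F` on `a, b`, with
`w = (ba⁻¹)^m (b⁻¹a)^m` and `r = wⁿ a w⁻ⁿ b⁻¹`, the Fox derivative `∂r/∂a` equals
`wⁿ (1 + (1-a) δ_{n-1}(w⁻¹) (a⁻¹b)^m (b⁻¹-1) δ_{m-1}(ab⁻¹))` in `ℤ[F]`,
where `δ_p(u) = 1 + u + ⋯ + u^p`. The Fox derivative is encoded as a `ℤ`-linear map `d` on the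
group ring determined by `d a = 1`, `d b = 0`, and the product rule. -/
theorem fox_derivative_of_relator
    (m n : ℕ) (hm : 0 < m) (hn : 0 < n)
    (a b : FreeGroup Bool) (ha : a = FreeGroup.of true) (hb : b = FreeGroup.of false)
    (d : MonoidAlgebra ℤ (FreeGroup Bool) →ₗ[ℤ] MonoidAlgebra ℤ (FreeGroup Bool))
    (hda : d (MonoidAlgebra.of ℤ (FreeGroup Bool) a) = 1)
    (hdb : d (MonoidAlgebra.of ℤ (FreeGroup Bool) b) = 0)
    (hprod : ∀ u v : FreeGroup Bool,
      d (MonoidAlgebra.of ℤ (FreeGroup Bool) (u * v)) =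
        d (MonoidAlgebra.of ℤ (FreeGroup Bool) u) +
          MonoidAlgebra.of ℤ (FreeGroup Bool) u * d (MonoidAlgebra.of ℤ (FreeGroup Bool) v))
    (w r : FreeGroup Bool)
    (hw : w = (b * a⁻¹) ^ m * (b⁻¹ * a) ^ m)
    (hr : r = w ^ n * a * (w ^ n)⁻¹ * b⁻¹) :
    d (MonoidAlgebra.of ℤ (FreeGroup Bool) r) =
      MonoidAlgebra.of ℤ (FreeGroup Bool) (w ^ n) *
        (1 + (1 - MonoidAlgebra.of ℤ (FreeGroup Bool) a) *
          (∑ i ∈ Finset.range n, MonoidAlgebra.of ℤ (FreeGroup Bool) (w⁻¹ ^ i)) *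
          MonoidAlgebra.of ℤ (FreeGroup Bool) ((a⁻¹ * b) ^ m) *
          (MonoidAlgebra.of ℤ (FreeGroup Bool) b⁻¹ - 1) *
          (∑ i ∈ Finset.range m, MonoidAlgebra.of ℤ (FreeGroup Bool) ((a * b⁻¹) ^ i))) := by
  set φ := MonoidAlgebra.of ℤ (FreeGroup Bool) with hφdef
  have d1 : d (φ 1) = 0 := by
    have h := hprod 1 1
    rw [one_mul, map_one, one_mul] at h
    exact (left_eq_add.mp h)
  have dinv : ∀ u : FreeGroup Bool, d (φ u⁻¹) = -(φ u⁻¹ * d (φ u)) := by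
    intro u
    have h := hprod u⁻¹ u
    rw [inv_mul_cancel, d1] at h
    exact eq_neg_of_add_eq_zero_left h.symm
  have dpow : ∀ (u : FreeGroup Bool) (k : ℕ),
      d (φ (u ^ k)) = (∑ i ∈ Finset.range k, φ u ^ i) * d (φ u) := by
    intro u k
    induction k with
    | zero => simpa using d1
    | succ k ih =>
      have h := hprod (u ^ k) u
      rw [← pow_succ] at h
      rw [h, ih, Finset.sum_range_succ, add_mul, map_pow]
  -- concrete derivatives
  have dba : d (φ (b * a⁻¹)) = -φ (b * a⁻¹) := by
    rw [hprod b a⁻¹, hdb, dinv a, hda, zero_add, mul_one, mul_neg, ← map_mul]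
  have dbia : d (φ (b⁻¹ * a)) = φ b⁻¹ := by
    rw [hprod b⁻¹ a, hda, dinv b, hdb, mul_zero, neg_zero, zero_add, mul_one]
  have hdw : d (φ w) =
      (∑ i ∈ Finset.range m, φ (b * a⁻¹) ^ i) * (-φ (b * a⁻¹)) +
        φ (b * a⁻¹) ^ m * ((∑ i ∈ Finset.range m, φ (b⁻¹ * a) ^ i) * φ b⁻¹) := by
    rw [hw, hprod, dpow, dpow, dba, dbia, map_pow]
  -- group facts
  have hba : (b * a⁻¹) = (a * b⁻¹)⁻¹ := by group
  have hxy : φ (a * b⁻¹) * φ (b * a⁻¹) = 1 := by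
    rw [← map_mul, hba, mul_inv_cancel, map_one]
  have hw' : w⁻¹ = (a⁻¹ * b) ^ m * (a * b⁻¹) ^ m := by
    rw [hw, mul_inv_rev, ← inv_pow, ← inv_pow, mul_inv_rev, mul_inv_rev, inv_inv, inv_inv]
  have hφwinv : φ w⁻¹ = φ ((a⁻¹ * b) ^ m) * φ (a * b⁻¹) ^ m := by
    rw [hw', map_mul, map_pow φ (a * b⁻¹) m]
  have hsum2 : (∑ i ∈ Finset.range m, φ (b⁻¹ * a) ^ i) * φ b⁻¹ =
      φ b⁻¹ * (∑ i ∈ Finset.range m, φ (a * b⁻¹) ^ i) := by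
    rw [Finset.sum_mul, Finset.mul_sum]
    refine Finset.sum_congr rfl fun i _ => ?_
    rw [← map_pow, ← map_pow, ← map_mul, ← map_mul, conj_pow']
  have hflip1 := geom_flip (φ (b * a⁻¹)) (φ (a * b⁻¹)) hxy m
  -- key identity
  have hK : φ w⁻¹ * d (φ w) =
      φ ((a⁻¹ * b) ^ m) * (φ b⁻¹ - 1) * (∑ i ∈ Finset.range m, φ (a * b⁻¹) ^ i) := by
    calc φ w⁻¹ * d (φ w)
        = φ ((a⁻¹ * b) ^ m) * φ (a * b⁻¹) ^ m *
            ((∑ i ∈ Finset.range m, φ (b * a⁻¹) ^ i) * (-φ (b * a⁻¹)) +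
              φ (b * a⁻¹) ^ m * ((∑ i ∈ Finset.range m, φ (b⁻¹ * a) ^ i) * φ b⁻¹)) := by
          rw [hdw, hφwinv]
      _ = -(φ ((a⁻¹ * b) ^ m) *
            (φ (a * b⁻¹) ^ m * (∑ i ∈ Finset.range m, φ (b * a⁻¹) ^ i) * φ (b * a⁻¹))) +
          φ ((a⁻¹ * b) ^ m) * (φ (a * b⁻¹) ^ m * φ (b * a⁻¹) ^ m) *
            ((∑ i ∈ Finset.range m, φ (b⁻¹ * a) ^ i) * φ b⁻¹) := by
          noncomm_ring
      _ = -(φ ((a⁻¹ * b) ^ m) * (∑ i ∈ Finset.range m, φ (a * b⁻¹) ^ i)) +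
          φ ((a⁻¹ * b) ^ m) * 1 *
            (φ b⁻¹ * (∑ i ∈ Finset.range m, φ (a * b⁻¹) ^ i)) := by
          rw [hflip1, pow_cancel' (φ (b * a⁻¹)) (φ (a * b⁻¹)) hxy m, hsum2]
      _ = φ ((a⁻¹ * b) ^ m) * (φ b⁻¹ - 1) * (∑ i ∈ Finset.range m, φ (a * b⁻¹) ^ i) := by
          noncomm_ring
  -- w-level facts
  have hz : φ w⁻¹ * φ w = 1 := by rw [← map_mul, inv_mul_cancel, map_one]
  have hz2 : φ w * φ w⁻¹ = 1 := by rw [← map_mul, mul_inv_cancel, map_one]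
  have hT : (∑ i ∈ Finset.range n, φ (w⁻¹ ^ i)) =
      φ w⁻¹ ^ n * (∑ i ∈ Finset.range n, φ w ^ i) * φ w := by
    rw [geom_flip (φ w) (φ w⁻¹) hz n]
    exact Finset.sum_congr rfl fun i _ => map_pow φ w⁻¹ i
  have hpowinv : φ ((w ^ n)⁻¹) = φ w⁻¹ ^ n := by rw [← inv_pow, map_pow]
  have hpowc : φ w ^ n * φ w⁻¹ ^ n = 1 := pow_cancel' (φ w⁻¹) (φ w) hz2 n
  -- expand d r
  rw [hr, hprod (w ^ n * a * (w ^ n)⁻¹) b⁻¹, hprod (w ^ n * a) (w ^ n)⁻¹,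
    hprod (w ^ n) a, hda, dinv b, hdb, mul_zero, neg_zero, mul_zero, add_zero,
    dinv (w ^ n), dpow w n, map_mul φ (w ^ n) a, hpowinv]
  rw [map_pow φ w n]
  have hs : (∑ i ∈ Finset.range m, φ ((a * b⁻¹) ^ i)) =
      ∑ i ∈ Finset.range m, φ (a * b⁻¹) ^ i :=
    Finset.sum_congr rfl fun i _ => map_pow φ (a * b⁻¹) i
  rw [hs, hT]
  calc (∑ i ∈ Finset.range n, φ w ^ i) * d (φ w) + φ w ^ n * 1 +
        φ w ^ n * φ a * -(φ w⁻¹ ^ n * ((∑ i ∈ Finset.range n, φ w ^ i) * d (φ w)))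
      = φ w ^ n + (φ w ^ n * φ w⁻¹ ^ n) * ((∑ i ∈ Finset.range n, φ w ^ i) * d (φ w)) -
          φ w ^ n * φ a * (φ w⁻¹ ^ n * ((∑ i ∈ Finset.range n, φ w ^ i) * d (φ w))) := by
        rw [hpowc]; noncomm_ring
    _ = φ w ^ n * (1 + (1 - φ a) *
          (φ w⁻¹ ^ n * (∑ i ∈ Finset.range n, φ w ^ i) * ((φ w * φ w⁻¹) * d (φ w)))) := by
        rw [hz2]; noncomm_ring
    _ = φ w ^ n * (1 + (1 - φ a) *
          (φ w⁻¹ ^ n * (∑ i ∈ Finset.range n, φ w ^ i) * φ w * (φ w⁻¹ * d (φ w)))) := by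
        noncomm_ring
    _ = φ w ^ n * (1 + ((1 - φ a) * ((φ w⁻¹ ^ n * ∑ i ∈ Finset.range n, φ w ^ i) * φ w)) *
          φ ((a⁻¹ * b) ^ m) * (φ b⁻¹ - 1) * (∑ i ∈ Finset.range m, φ (a * b⁻¹) ^ i)) := by
        rw [hK]; noncomm_ring
end

section
/- Let y be a complex number with y² ≠ 4, s ≠ 0, and m a positive integer. Let N = [[y-1, s],[s^{-1}(y-2), 1]] ∈ SL_2(ℂ) (so tr N = y). Then the (1,1)-entry of the 3×3 matrix Σ_{i=0}^{m-1}(Ad_N)^i, in the basis {E,H,F} of sl_2(ℂ), equals (y-2)(2m + 2S_m(y)S_{m-1}(y) - y S_{m-1}(y)²)/(y²-4), where S_k are the Chebyshev polynomials of the second kind. -/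
lemma adMatN (s y : ℂ) (hs : s ≠ 0) :
    AdMat !![y - 1, s; s⁻¹ * (y - 2), 1] =
      !![(y-1)^2, -2*(y-1)*s, -s^2;
         -(y-1)*(s⁻¹*(y-2)), (y-1) + (y-2), s;
         -(s⁻¹*(y-2))^2, 2*(s⁻¹*(y-2)), 1] := by
  have hinv : (!![y - 1, s; s⁻¹ * (y - 2), 1])⁻¹ = !![1, -s; -(s⁻¹*(y-2)), y-1] := by
    apply Matrix.inv_eq_right_inv
    ext i j
    fin_cases i <;> fin_cases j <;>
      simp [Matrix.mul_apply, Fin.sum_univ_two] <;> (try field_simp) <;> ring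
  ext i j
  fin_cases i <;> fin_cases j <;>
    simp [AdMat, hinv, Matrix.mul_apply, Fin.sum_univ_two] <;> (try field_simp) <;> ring

lemma keycol
    (S : ℤ → ℂ → ℂ)
    (hS0 : ∀ v, S 0 v = 1) (hS1 : ∀ v, S 1 v = v)
    (hSrec : ∀ (k : ℤ) (v : ℂ), S k v = v * S (k - 1) v - S (k - 2) v)
    (s y : ℂ) (hs : s ≠ 0) (i : ℕ) :
    ((AdMat !![y - 1, s; s⁻¹ * (y - 2), 1]) ^ i) 0 0
        = (S i y - S ((i:ℤ)-1) y)^2 ∧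
    ((AdMat !![y - 1, s; s⁻¹ * (y - 2), 1]) ^ i) 1 0
        = -(S i y - S ((i:ℤ)-1) y) * (s⁻¹*(y-2)*S ((i:ℤ)-1) y) ∧
    ((AdMat !![y - 1, s; s⁻¹ * (y - 2), 1]) ^ i) 2 0
        = -(s⁻¹*(y-2)*S ((i:ℤ)-1) y)^2 := by
  have hm1 : S (-1) y = 0 := by
    have h := hSrec 1 y
    simp [hS0, hS1] at h
    linear_combination h
  induction i with
  | zero =>
    simp [hS0, hm1]
  | succ n ih =>
    obtain ⟨h0, h1, h2⟩ := ih
    have hrec : S ((n:ℤ)+1) y = y * S n y - S ((n:ℤ)-1) y := by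
      have h := hSrec ((n:ℤ)+1) y
      rw [show ((n:ℤ)+1-1) = (n:ℤ) from by ring, show ((n:ℤ)+1-2) = (n:ℤ)-1 from by ring] at h
      exact h
    have hcast : ((n+1 : ℕ) : ℤ) = (n:ℤ) + 1 := by push_cast; ring
    rw [pow_succ']
    refine ⟨?_, ?_, ?_⟩ <;>
      (rw [Matrix.mul_apply, Fin.sum_univ_three, h0, h1, h2, adMatN s y hs, hcast,
          show ((n:ℤ)+1-1) = (n:ℤ) from by ring]; try rw [hrec]) <;>
      simp <;> field_simp <;> ring

lemma pell
    (S : ℤ → ℂ → ℂ)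
    (hS0 : ∀ v, S 0 v = 1) (hS1 : ∀ v, S 1 v = v)
    (hSrec : ∀ (k : ℤ) (v : ℂ), S k v = v * S (k - 1) v - S (k - 2) v)
    (y : ℂ) (n : ℕ) :
    S n y ^ 2 + S ((n:ℤ)-1) y ^ 2 - y * S n y * S ((n:ℤ)-1) y = 1 := by
  have hm1 : S (-1) y = 0 := by
    have h := hSrec 1 y
    simp [hS0, hS1] at h
    linear_combination h
  induction n with
  | zero => simp [hS0, hm1]
  | succ n ih =>
    have hrec : S ((n:ℤ)+1) y = y * S n y - S ((n:ℤ)-1) y := by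
      have h := hSrec ((n:ℤ)+1) y
      rw [show ((n:ℤ)+1-1) = (n:ℤ) from by ring, show ((n:ℤ)+1-2) = (n:ℤ)-1 from by ring] at h
      exact h
    rw [show ((n+1:ℕ):ℤ) = (n:ℤ)+1 from by push_cast; ring,
        show ((n:ℤ)+1-1) = (n:ℤ) from by ring, hrec]
    linear_combination ih


/-- the `(1,1)`-entry of `Σ_{i=0}^{m-1} (Ad_N)^i` for
`N = [[y-1, s],[s⁻¹(y-2), 1]]` equals `(y-2)(2m + 2S_m(y)S_{m-1}(y) - y S_{m-1}(y)²)/(y²-4)`. -/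
theorem adjoint_sum_entry_one_one
    (S : ℤ → ℂ → ℂ)
    (hS0 : ∀ v, S 0 v = 1) (hS1 : ∀ v, S 1 v = v)
    (hSrec : ∀ (k : ℤ) (v : ℂ), S k v = v * S (k - 1) v - S (k - 2) v)
    (s y : ℂ) (hs : s ≠ 0) (hy : y ^ 2 ≠ 4) (m : ℕ) (hm : 0 < m) :
    (∑ i ∈ Finset.range m, (AdMat !![y - 1, s; s⁻¹ * (y - 2), 1]) ^ i) 0 0 =
      (y - 2) * (2 * m + 2 * S m y * S ((m : ℤ) - 1) y - y * S ((m : ℤ) - 1) y ^ 2) /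
        (y ^ 2 - 4) := by
  have h4 : y ^ 2 - 4 ≠ 0 := sub_ne_zero.mpr hy
  induction m with
  | zero => exact absurd hm (lt_irrefl 0)
  | succ n ih =>
    rcases Nat.eq_zero_or_pos n with hn | hn
    · subst hn
      rw [Finset.sum_range_one, pow_zero]
      simp only [Matrix.one_apply_eq, Nat.cast_one]
      rw [show ((1:ℕ):ℤ) = 1 from rfl, hS1, show (1:ℤ)-1 = 0 from rfl, hS0]
      field_simp
      ring
    · rw [Finset.sum_range_succ, Matrix.add_apply, ih hn, (keycol S hS0 hS1 hSrec s y hs n).1]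
      have hrec : S ((n:ℤ)+1) y = y * S n y - S ((n:ℤ)-1) y := by
        have h := hSrec ((n:ℤ)+1) y
        rw [show ((n:ℤ)+1-1) = (n:ℤ) from by ring, show ((n:ℤ)+1-2) = (n:ℤ)-1 from by ring] at h
        exact h
      rw [show ((n+1:ℕ):ℤ) = (n:ℤ)+1 from by push_cast; ring,
          show ((n:ℤ)+1-1) = (n:ℤ) from by ring, hrec]
      have hp := pell S hS0 hS1 hSrec y n
      push_cast
      field_simp
      linear_combination (2*y-4) * hp
end
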